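/- arXiv:1804.10769 — 9 statements merged into one kernel-verified Lean document; each statement's English description precedes it below -/
import Mathlib

section
/- Let a < 0, 0 < r < 1 and σ = -a·r. Then the origin (0,0,0) is the unique zero of the generalized Lorenz vector field: if f(x1,x2,x3) = (0,0,0) then (x1,x2,x3) = (0,0,0). -/
/-- For `a < 0`, `0 < r < 1`, `σ = -a*r`, the origin is the unique zero of the
generalized Lorenz vector field. -/
theorem lorenz_unique_equilibrium (a r σ : ℝ) (ha : a < 0) (hr0 : 0 < r) (hr1 : r < 1)
    (hσ : σ = -a * r)
    (f : ℝ → ℝ → ℝ → ℝ × ℝ × ℝ)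
    (hf : ∀ x1 x2 x3 : ℝ,
      f x1 x2 x3 = (-σ * (x1 - x2) - a * x2 * x3, r * x1 - x2 - x1 * x3, -x3 + x1 * x2)) :
    ∀ x1 x2 x3 : ℝ, f x1 x2 x3 = ((0 : ℝ), (0 : ℝ), (0 : ℝ)) →
      (x1, x2, x3) = ((0 : ℝ), (0 : ℝ), (0 : ℝ)) := by
  intro x1 x2 x3 h
  rw [hf] at h
  obtain ⟨h1, h2, h3⟩ : (-σ * (x1 - x2) - a * x2 * x3 = 0) ∧
      (r * x1 - x2 - x1 * x3 = 0) ∧ (-x3 + x1 * x2 = 0) := by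
    simpa [Prod.ext_iff] using h
  subst hσ
  have hane : a ≠ 0 := ne_of_lt ha
  -- divide the first equation by a
  have e1 : r * (x1 - x2) - x2 * x3 = 0 := by
    have : a * (r * (x1 - x2) - x2 * x3) = 0 := by ring_nf; ring_nf at h1; linarith
    rcases mul_eq_zero.mp this with h' | h'
    · exact absurd h' hane
    · exact h'
  have hx3 : x3 = x1 * x2 := by linarith
  subst hx3
  -- e1 : r*(x1 - x2) = x1*x2^2 ; h2 : x2*(1+x1^2) = r*x1
  have e2 : x2 * (1 + x1 ^ 2) = r * x1 := by nlinarith [h2]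
  -- substitute: x2*(1 + x1^2 - r) = x1*x2^2
  have e3 : x2 * (1 + x1 ^ 2 - r - x1 * x2) = 0 := by nlinarith [e1, e2]
  have hx2 : x2 = 0 := by
    rcases mul_eq_zero.mp e3 with h' | h'
    · exact h'
    -- h' : 1 + x1^2 - r = x1*x2
    · exfalso
      have hmul : (x2 * (1 + x1 ^ 2)) * x1 = (r * x1) * x1 := by rw [e2]
      have key : (1 + x1 ^ 2 - r) * (1 + x1 ^ 2) = r * x1 ^ 2 := by nlinarith [hmul, h']
      nlinarith [key, sq_nonneg x1, sq_nonneg (x1 ^ 2)]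
  subst hx2
  have hx1 : x1 = 0 := by
    have := e2
    simp at this
    nlinarith [this]
  simp [hx1]
end

section
/- Let a < 0, r > 1, σ = -a·r, and set ξ = (σ/(2a²))·(a(r-2) - σ + √((σ-ar)² + 4aσ)). Assume σ + a·ξ ≠ 0, and define x* = σ√ξ/(σ + aξ), y* = √ξ, z* = σξ/(σ + aξ). Then both points X1* = (x*, y*, z*) and X2* = (-x*, -y*, z*) are zeros of the generalized Lorenz vector field f. -/
/-!
Every equilibrium off the `x₃`-axis satisfies `x₃ = x₁ x₂` and `x₁ = σ x₂ / (σ + a x₂²)`, so it is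
determined by `ξ = x₂²`, and the remaining equation `r x₁ - x₂ - x₁ x₃ = 0` becomes the quadratic
`σ (r σ + (r a - σ) ξ) = (σ + a ξ)²`. For `σ = -a r` this is `ξ² + 2 r (r - 1) ξ = r² (r - 1)`,
whose nonnegative root is `r (√(r (r - 1)) - (r - 1))`, the stated `ξ`. The field is equivariant
under `(x₁, x₂, x₃) ↦ (-x₁, -x₂, x₃)`, which gives the second equilibrium.
-/

namespace Lorenz

def field (a r σ x₁ x₂ x₃ : ℝ) : ℝ × ℝ × ℝ :=
  (-σ * (x₁ - x₂) - a * x₂ * x₃, r * x₁ - x₂ - x₁ * x₃, -x₃ + x₁ * x₂)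

variable {a r σ : ℝ}

theorem field_neg_neg_eq_zero {x₁ x₂ x₃ : ℝ} (h : field a r σ x₁ x₂ x₃ = 0) :
    field a r σ (-x₁) (-x₂) x₃ = 0 := by
  simp only [field, Prod.mk_eq_zero] at h ⊢
  obtain ⟨h₁, h₂, h₃⟩ := h
  exact ⟨by linear_combination -h₁, by linear_combination -h₂, by linear_combination h₃⟩

theorem field_eq_zero_of_sq_eq {ξ y : ℝ} (hy : y ^ 2 = ξ) (hden : σ + a * ξ ≠ 0)
    (hξ : σ * (r * σ + (r * a - σ) * ξ) = (σ + a * ξ) ^ 2) :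
    field a r σ (σ * y / (σ + a * ξ)) y (σ * ξ / (σ + a * ξ)) = 0 := by
  simp only [field, Prod.mk_eq_zero]
  refine ⟨?_, ?_, ?_⟩ <;> field_simp
  · ring
  · linear_combination y * hξ
  · linear_combination σ / (σ + ξ * a) * hy

theorem sqrt_discriminant (ha : a < 0) (hσ : σ = -a * r) :
    √((σ - a * r) ^ 2 + 4 * a * σ) = -2 * a * √(r * (r - 1)) := by
  have h : (σ - a * r) ^ 2 + 4 * a * σ = (-2 * a) ^ 2 * (r * (r - 1)) := by
    rw [hσ]; ring
  rw [h, Real.sqrt_mul (sq_nonneg _), Real.sqrt_sq (by linarith)]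

theorem xi_formula (ha : a < 0) (hσ : σ = -a * r) :
    σ / (2 * a ^ 2) * (a * (r - 2) - σ + √((σ - a * r) ^ 2 + 4 * a * σ)) =
      r * (√(r * (r - 1)) - (r - 1)) := by
  rw [sqrt_discriminant ha hσ, hσ]
  field_simp [ha.ne]
  ring

theorem xi_nonneg (hr : 1 ≤ r) : 0 ≤ r * (√(r * (r - 1)) - (r - 1)) := by
  have h : r - 1 ≤ √(r * (r - 1)) :=
    Real.le_sqrt_of_sq_le (by nlinarith)
  nlinarith

theorem xi_quadratic (hr : 1 ≤ r) :
    let ξ := r * (√(r * (r - 1)) - (r - 1))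
    ξ ^ 2 + 2 * r * (r - 1) * ξ = r ^ 2 * (r - 1) := by
  have h : √(r * (r - 1)) ^ 2 = r * (r - 1) := Real.sq_sqrt (by nlinarith)
  linear_combination r ^ 2 * h

end Lorenz

open Lorenz in
/-- For `a < 0`, `r > 1`, `σ = -a*r`, the points `X₁* = (x*, y*, z*)` and
`X₂* = (-x*, -y*, z*)` are zeros of the generalized Lorenz vector field. -/
theorem lorenz_nonzero_equilibria (a r σ ξ xs ys zs : ℝ) (ha : a < 0) (hr : 1 < r)
    (hσ : σ = -a * r)
    (hξ : ξ = σ / (2 * a ^ 2) *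
      (a * (r - 2) - σ + Real.sqrt ((σ - a * r) ^ 2 + 4 * a * σ)))
    (hden : σ + a * ξ ≠ 0)
    (hxs : xs = σ * Real.sqrt ξ / (σ + a * ξ))
    (hys : ys = Real.sqrt ξ)
    (hzs : zs = σ * ξ / (σ + a * ξ))
    (f : ℝ → ℝ → ℝ → ℝ × ℝ × ℝ)
    (hf : ∀ x1 x2 x3 : ℝ,
      f x1 x2 x3 = (-σ * (x1 - x2) - a * x2 * x3, r * x1 - x2 - x1 * x3, -x3 + x1 * x2)) :
    f xs ys zs = ((0 : ℝ), (0 : ℝ), (0 : ℝ)) ∧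
      f (-xs) (-ys) zs = ((0 : ℝ), (0 : ℝ), (0 : ℝ)) := by
  rw [xi_formula ha hσ] at hξ
  have hr' : 1 ≤ r := hr.le
  have hsq : ys ^ 2 = ξ := by rw [hys, Real.sq_sqrt (hξ ▸ xi_nonneg hr')]
  have hquad : σ * (r * σ + (r * a - σ) * ξ) = (σ + a * ξ) ^ 2 := by
    subst hσ hξ
    linear_combination (-a ^ 2) * xi_quadratic hr'
  have hzero : field a r σ xs ys zs = 0 := by
    rw [hxs, hzs, ← hys]
    exact field_eq_zero_of_sq_eq hsq hden hquad
  have hf' : f = field a r σ := by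
    funext x₁ x₂ x₃
    exact hf x₁ x₂ x₃
  rw [hf']
  exact ⟨hzero, field_neg_neg_eq_zero hzero⟩
end

section
/- Let a < 0, r > 1 and σ = -a·r. Then the generalized Lorenz vector field f has exactly three zeros in ℝ³: the origin and two further equilibria which are images of each other under the map (x1,x2,x3) ↦ (-x1,-x2,x3). -/
/-- For `a < 0`, `r > 1`, `σ = -a*r`, the generalized Lorenz vector field has exactly
three zeros: the origin and two further equilibria which are images of each other
under `(x1,x2,x3) ↦ (-x1,-x2,x3)`. -/
theorem lorenz_three_equilibria (a r σ : ℝ) (ha : a < 0) (hr : 1 < r)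
    (hσ : σ = -a * r)
    (f : ℝ × ℝ × ℝ → ℝ × ℝ × ℝ)
    (hf : ∀ x1 x2 x3 : ℝ,
      f (x1, x2, x3) =
        (-σ * (x1 - x2) - a * x2 * x3, r * x1 - x2 - x1 * x3, -x3 + x1 * x2)) :
    ∃ p : ℝ × ℝ × ℝ,
      {x : ℝ × ℝ × ℝ | f x = (0, 0, 0)} =
        {((0 : ℝ), (0 : ℝ), (0 : ℝ)), p, (-p.1, -p.2.1, p.2.2)} ∧
      p ≠ ((0 : ℝ), (0 : ℝ), (0 : ℝ)) ∧
      ((-p.1, -p.2.1, p.2.2) : ℝ × ℝ × ℝ) ≠ ((0 : ℝ), (0 : ℝ), (0 : ℝ)) ∧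
      ((-p.1, -p.2.1, p.2.2) : ℝ × ℝ × ℝ) ≠ p := by
  have hr0 : (0:ℝ) < r := lt_trans one_pos hr
  set s : ℝ := Real.sqrt (r*(r-1)) with hs_def
  have hs2 : s^2 = r*(r-1) := Real.sq_sqrt (by nlinarith)
  have hs_pos : 0 < s := Real.sqrt_pos.mpr (by nlinarith)
  have hsr : s < r := by nlinarith
  have hrs : (0:ℝ) < r - s := by linarith
  set t : ℝ := Real.sqrt (s/(r-s)) with ht_def
  have ht_pos : 0 < t := Real.sqrt_pos.mpr (div_pos hs_pos hrs)
  have ht2 : t^2 * (r - s) = s := by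
    have h1 : t^2 = s/(r-s) := Real.sq_sqrt (le_of_lt (div_pos hs_pos hrs))
    rw [h1, div_mul_cancel₀ _ (ne_of_gt hrs)]
  have ha' : a ≠ 0 := ne_of_lt ha
  refine ⟨(t, t*(r-s), s), ?_, ?_, ?_, ?_⟩
  · ext ⟨x1, x2, x3⟩
    simp only [Set.mem_setOf_eq, hf, Set.mem_insert_iff, Set.mem_singleton_iff,
      Prod.mk.injEq]
    constructor
    · rintro ⟨h1, h2, h3⟩
      have e2 : x2 = x1*(r-x3) := by linear_combination -h2
      have e3 : x3 = x1*x2 := by linear_combination -h3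
      have e1 : r*x1 = x2*(r+x3) := by
        have hA : a * (r*x1 - x2*(r+x3)) = 0 := by
          linear_combination h1 + (x1 - x2) * hσ
        have := (mul_eq_zero.mp hA).resolve_left ha'
        linarith
      have key : x1 * (x3^2 - s^2) = 0 := by
        rw [hs2]; linear_combination e1 + (r+x3)*e2
      rcases mul_eq_zero.mp key with h0 | hx3
      · subst h0
        left
        refine ⟨rfl, by linarith [e2], by linarith [e3]⟩
      · have hx3' : (x3 - s) * (x3 + s) = 0 := by linear_combination hx3
        rcases mul_eq_zero.mp hx3' with hA | hB
        · have hx3s : x3 = s := by linarith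
          subst hx3s
          have hthis : x1^2 * (r - s) = s := by
            linear_combination -e3 - x1 * e2
          have h5 : x1^2 = t^2 :=
            mul_right_cancel₀ (ne_of_gt hrs) (hthis.trans ht2.symm)
          have hx1sq : (x1 - t) * (x1 + t) = 0 := by linear_combination h5
          rcases mul_eq_zero.mp hx1sq with hc | hc
          · right; left
            have hx1 : x1 = t := by linarith
            subst hx1
            exact ⟨rfl, by linarith [e2], rfl⟩
          · right; right
            have hx1 : x1 = -t := by linarith
            subst hx1
            exact ⟨rfl, by linarith [e2], rfl⟩
        · exfalso
          have hx3s : x3 = -s := by linarith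
          subst hx3s
          have hcomb : x1^2 * (r + s) = -s := by
            linear_combination -e3 - x1 * e2
          nlinarith [sq_nonneg x1]
    · rintro (⟨hx1, hx2, hx3⟩ | ⟨hx1, hx2, hx3⟩ | ⟨hx1, hx2, hx3⟩) <;>
        subst hx1 <;> subst hx2 <;> subst hx3
      · exact ⟨by ring, by ring, by ring⟩
      · exact ⟨by linear_combination (a*t)*hs2 + (t*(r-s) - t)*hσ, by ring,
          by linear_combination ht2⟩
      · exact ⟨by linear_combination (-(a*t))*hs2 + (t - t*(r-s))*hσ, by ring,
          by linear_combination ht2⟩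
  · intro h
    have h1 := congrArg Prod.fst h
    simp only [Prod.fst] at h1
    linarith
  · intro h
    have h1 := congrArg Prod.fst h
    simp only [Prod.fst, neg_eq_zero] at h1
    linarith
  · intro h
    have h1 := congrArg Prod.fst h
    simp only [Prod.fst] at h1
    linarith
end

section
/- Let a < 0, r > 1 and σ = -a·r. Then (σ-ar)² + 4aσ = 4a²r(r-1) ≥ 0, and the quantity ξ = (σ/(2a²))·(a(r-2) - σ + √((σ-ar)² + 4aσ)) satisfies ξ = r(√(r(r-1)) - (r-1)) > 0. -/
/-!
With `σ = -a r` the discriminant is the perfect square `(2a)² · r(r-1)`, so for `a < 0` its root is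
`-2a √(r(r-1))`, and the prefactor `σ / (2a²) = -r / (2a)` cancels the factor `-2a`. Positivity
of `ξ` is `(r-1)² < r(r-1)` for `r > 1`.
-/

namespace Lorenz

lemma discriminant_eq (a r : ℝ) :
    (-a * r - a * r) ^ 2 + 4 * a * (-a * r) = (2 * a) ^ 2 * (r * (r - 1)) := by
  ring

lemma sqrt_sq_mul_of_nonpos {c : ℝ} (hc : c ≤ 0) (x : ℝ) :
    Real.sqrt (c ^ 2 * x) = -c * Real.sqrt x := by
  rw [Real.sqrt_mul (sq_nonneg c), Real.sqrt_sq_eq_abs, abs_of_nonpos hc]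

lemma sub_one_lt_sqrt_mul_sub_one {r : ℝ} (hr : 1 < r) : r - 1 < Real.sqrt (r * (r - 1)) := by
  rw [Real.lt_sqrt (by linarith)]
  nlinarith

end Lorenz

/-- For `a < 0`, `r > 1`, `σ = -a*r`, one has
`(σ - a r)² + 4 a σ = 4 a² r (r-1) ≥ 0`, and
`ξ = (σ/(2a²))·(a(r-2) - σ + √((σ-ar)² + 4aσ)) = r(√(r(r-1)) - (r-1)) > 0`. -/
theorem lorenz_xi_formula (a r σ ξ : ℝ) (ha : a < 0) (hr : 1 < r)
    (hσ : σ = -a * r)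
    (hξ : ξ = σ / (2 * a ^ 2) *
      (a * (r - 2) - σ + Real.sqrt ((σ - a * r) ^ 2 + 4 * a * σ))) :
    (σ - a * r) ^ 2 + 4 * a * σ = 4 * a ^ 2 * r * (r - 1) ∧
    0 ≤ (σ - a * r) ^ 2 + 4 * a * σ ∧
    ξ = r * (Real.sqrt (r * (r - 1)) - (r - 1)) ∧
    0 < ξ := by
  subst hσ
  have hdisc := Lorenz.discriminant_eq a r
  have hroot : Real.sqrt ((-a * r - a * r) ^ 2 + 4 * a * (-a * r))
      = -(2 * a) * Real.sqrt (r * (r - 1)) := by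
    rw [hdisc, Lorenz.sqrt_sq_mul_of_nonpos (by linarith)]
  have hξ_eq : ξ = r * (Real.sqrt (r * (r - 1)) - (r - 1)) := by
    have ha0 : a ≠ 0 := ha.ne
    rw [hξ, hroot]
    field_simp
    ring
  have hdisc_nonneg : 0 ≤ (-a * r - a * r) ^ 2 + 4 * a * (-a * r) := by
    rw [hdisc]
    exact mul_nonneg (sq_nonneg _) (by nlinarith)
  refine ⟨by rw [hdisc]; ring, hdisc_nonneg, hξ_eq, ?_⟩
  rw [hξ_eq]
  exact mul_pos (by linarith) (sub_pos.mpr (Lorenz.sub_one_lt_sqrt_mul_sub_one hr))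
end

section
/- Let r = 34/5, a = -1/2, σ = -a·r = 17/5, ξ = r(√(r(r-1)) - (r-1)), x* = σ√ξ/(σ + aξ), y* = √ξ, z* = σξ/(σ + aξ), and let J be the real 3×3 matrix [[-σ, σ - a·z*, -a·y*], [r - z*, -1, -x*], [y*, x*, -1]] (the Jacobian of the generalized Lorenz vector field at the equilibrium X1* = (x*, y*, z*)). Then every complex eigenvalue of J has strictly negative real part. -/
/-!
At any equilibrium with `y ≠ 0` the relations `y (σ - a z) = σ x` and `x (r - z) = y` give
`(σ - a z)(r - z) = σ`, and the characteristic polynomial of the Jacobian collapses to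
`μ³ + (σ + 2) μ² + (σ + 1 + a y² + x²) μ + 2 (σ x² + a y²)`. For `X₁*` one has `ξ = r t` with
`t` the positive root of `t² + 2 (r - 1) t = r - 1`, and then `x*² = t + 2 (r - 1)`, so the
constant term is `4 σ (r - 1)`. For `r = 34/5`, `σ = 17/5` the Routh–Hurwitz conditions for the
cubic then reduce to `t < 1/2`.
-/

theorem Complex.re_neg_of_cubic_eq_zero {c₂ c₁ c₀ : ℝ} (h₂ : 0 < c₂) (h₀ : 0 < c₀)
    (h₂₁₀ : c₀ < c₂ * c₁) {μ : ℂ} (hμ : μ ^ 3 + c₂ * μ ^ 2 + c₁ * μ + c₀ = 0) : μ.re < 0 := by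
  have h₁ : 0 < c₁ := pos_of_mul_pos_right (h₀.trans h₂₁₀) h₂.le
  obtain ⟨x, y⟩ := μ
  have hre := congrArg re hμ
  have him := congrArg im hμ
  simp only [pow_succ, pow_zero, one_mul, add_re, add_im, mul_re, mul_im, ofReal_re, ofReal_im,
    zero_re, zero_im] at hre him
  dsimp only at hre him ⊢
  by_contra! hx
  have him' : y * (3 * x ^ 2 - y ^ 2 + 2 * c₂ * x + c₁) = 0 := by linear_combination him
  rcases mul_eq_zero.mp him' with rfl | hy
  · nlinarith [mul_nonneg (mul_nonneg hx hx) hx, mul_nonneg h₂.le (mul_nonneg hx hx),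
      mul_nonneg h₁.le hx]
  · -- eliminating `y²` leaves a cubic in `x` with positive coefficients
    have h8 : 8 * x ^ 3 + 8 * c₂ * x ^ 2 + 2 * (c₁ + c₂ ^ 2) * x + (c₂ * c₁ - c₀) = 0 := by
      linear_combination (-1) * hre + (3 * x + c₂) * hy
    nlinarith [mul_nonneg (mul_nonneg hx hx) hx, mul_nonneg h₂.le (mul_nonneg hx hx),
      mul_nonneg (add_pos h₁ (pow_pos h₂ 2)).le hx]

def Matrix.sumPrincipalMinors₂ {R : Type*} [CommRing R] (A : Matrix (Fin 3) (Fin 3) R) : R :=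
  A 0 0 * A 1 1 - A 0 1 * A 1 0 + A 0 0 * A 2 2 - A 0 2 * A 2 0 + A 1 1 * A 2 2 - A 1 2 * A 2 1

theorem Matrix.cubic_eq_zero_of_mem_spectrum {K : Type*} [Field K] {A : Matrix (Fin 3) (Fin 3) K}
    {μ : K} (hμ : μ ∈ spectrum K A) :
    μ ^ 3 - A.trace * μ ^ 2 + A.sumPrincipalMinors₂ * μ - A.det = 0 := by
  have hdet : (algebraMap K _ μ - A).det = 0 := by
    by_contra h
    exact spectrum.mem_iff.mp hμ ((Matrix.isUnit_iff_isUnit_det _).mpr (isUnit_iff_ne_zero.mpr h))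
  rw [Matrix.det_fin_three] at hdet
  simp only [Matrix.sub_apply, Matrix.algebraMap_matrix_apply, Algebra.algebraMap_self,
    RingHom.id_apply, Fin.reduceEq, ↓reduceIte, zero_sub] at hdet
  rw [Matrix.trace_fin_three, Matrix.det_fin_three, Matrix.sumPrincipalMinors₂]
  linear_combination hdet

theorem Matrix.cubic_eq_zero_of_mem_spectrum_map_ofReal {A : Matrix (Fin 3) (Fin 3) ℝ}
    {μ : ℂ} (hμ : μ ∈ spectrum ℂ (A.map (Complex.ofReal ·))) :
    μ ^ 3 - (A.trace : ℂ) * μ ^ 2 + (A.sumPrincipalMinors₂ : ℂ) * μ - (A.det : ℂ) = 0 := by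
  have := Matrix.cubic_eq_zero_of_mem_spectrum hμ
  rw [Matrix.trace_fin_three, Matrix.det_fin_three, Matrix.sumPrincipalMinors₂] at this ⊢
  push_cast
  simpa using this

def lorenzJacobian (a σ r x y z : ℝ) : Matrix (Fin 3) (Fin 3) ℝ :=
  !![-σ, σ - a * z, -a * y; r - z, -1, -x; y, x, -1]

structure IsLorenzEquilibrium (a σ r x y z : ℝ) : Prop where
  eq_x : -σ * (x - y) - a * y * z = 0
  eq_y : r * x - y - x * z = 0
  eq_z : -z + x * y = 0

theorem trace_lorenzJacobian (a σ r x y z : ℝ) :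
    (lorenzJacobian a σ r x y z).trace = -(σ + 2) := by
  simp only [lorenzJacobian, Matrix.trace_fin_three, Matrix.of_apply, Matrix.cons_val',
    Matrix.cons_val_zero, Matrix.cons_val_one, Matrix.cons_val, Matrix.cons_val_fin_one]
  ring

namespace IsLorenzEquilibrium

variable {a σ r x y z : ℝ}

theorem sub_mul_sub_eq (h : IsLorenzEquilibrium a σ r x y z) (hy : y ≠ 0) :
    (σ - a * z) * (r - z) = σ := by
  refine mul_left_cancel₀ hy ?_
  linear_combination (r - z) * h.eq_x + σ * h.eq_y

theorem sumPrincipalMinors₂_lorenzJacobian (h : IsLorenzEquilibrium a σ r x y z) (hy : y ≠ 0) :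
    (lorenzJacobian a σ r x y z).sumPrincipalMinors₂ = σ + 1 + a * y ^ 2 + x ^ 2 := by
  simp only [Matrix.sumPrincipalMinors₂, lorenzJacobian, Matrix.of_apply, Matrix.cons_val',
    Matrix.cons_val_zero, Matrix.cons_val_one, Matrix.cons_val, Matrix.cons_val_fin_one]
  linear_combination -(h.sub_mul_sub_eq hy)

theorem det_lorenzJacobian (h : IsLorenzEquilibrium a σ r x y z) (hy : y ≠ 0) :
    (lorenzJacobian a σ r x y z).det = -2 * (σ * x ^ 2 + a * y ^ 2) := by
  simp only [lorenzJacobian, Matrix.det_fin_three, Matrix.of_apply, Matrix.cons_val',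
    Matrix.cons_val_zero, Matrix.cons_val_one, Matrix.cons_val, Matrix.cons_val_fin_one]
  linear_combination (h.sub_mul_sub_eq hy) - x * h.eq_x - a * y * h.eq_y

end IsLorenzEquilibrium

noncomputable def lorenzRoot (r : ℝ) : ℝ := √(r * (r - 1)) - (r - 1)

theorem lorenzRoot_sq_add {r : ℝ} (hr : 1 ≤ r) :
    lorenzRoot r ^ 2 + 2 * (r - 1) * lorenzRoot r = r - 1 := by
  have h := Real.sq_sqrt (by nlinarith : 0 ≤ r * (r - 1))
  unfold lorenzRoot
  linear_combination h

theorem lorenzRoot_pos {r : ℝ} (hr : 1 < r) : 0 < lorenzRoot r := by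
  unfold lorenzRoot
  have : r - 1 < √(r * (r - 1)) := Real.lt_sqrt_of_sq_lt (by nlinarith)
  linarith

theorem lorenzRoot_lt_half {r : ℝ} (hr : 1 < r) : lorenzRoot r < 1 / 2 := by
  nlinarith [lorenzRoot_sq_add hr.le, lorenzRoot_pos hr]

theorem isLorenzEquilibrium_X1 {a σ r t y : ℝ} (hσ : σ = -a * r)
    (ht : t ^ 2 + 2 * (r - 1) * t = r - 1) (ht1 : t ≠ 1) (hy : y ^ 2 = r * t) :
    IsLorenzEquilibrium a σ r (y / (1 - t)) y (r * t / (1 - t)) := by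
  have h1t : 1 - t ≠ 0 := sub_ne_zero.mpr ht1.symm
  constructor
  · field_simp
    linear_combination (-t) * y * hσ
  · field_simp
    linear_combination (-y) * ht
  · field_simp
    linear_combination hy

theorem sq_div_one_sub_eq {r t y : ℝ} (ht : t ^ 2 + 2 * (r - 1) * t = r - 1) (ht1 : t ≠ 1)
    (hy : y ^ 2 = r * t) : (y / (1 - t)) ^ 2 = t + 2 * (r - 1) := by
  have h1t : 1 - t ≠ 0 := sub_ne_zero.mpr ht1.symm
  field_simp
  linear_combination hy + (2 - t) * ht

/-- For `r = 34/5`, `a = -1/2`, the Jacobian of the generalized Lorenz vector field at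
the equilibrium `X₁* = (x*, y*, z*)` has all its complex eigenvalues with strictly
negative real part. -/
theorem lorenz_X1_eigenvalues_stable (a r σ ξ xs ys zs : ℝ)
    (har : a = -1/2) (hrr : r = 34/5) (hσ : σ = -a * r)
    (hξ : ξ = r * (Real.sqrt (r * (r - 1)) - (r - 1)))
    (hxs : xs = σ * Real.sqrt ξ / (σ + a * ξ))
    (hys : ys = Real.sqrt ξ)
    (hzs : zs = σ * ξ / (σ + a * ξ))
    (J : Matrix (Fin 3) (Fin 3) ℝ)
    (hJ : J = !![-σ, σ - a * zs, -a * ys; r - zs, -1, -xs; ys, xs, -1]) :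
    ∀ μ : ℂ, μ ∈ spectrum ℂ (J.map (Complex.ofReal ·)) → μ.re < 0 := by
  intro μ hμ
  change ξ = r * lorenzRoot r at hξ
  set t := lorenzRoot r
  have hr : 1 < r := by rw [hrr]; norm_num
  have ht : t ^ 2 + 2 * (r - 1) * t = r - 1 := lorenzRoot_sq_add hr.le
  have ht0 : 0 < t := lorenzRoot_pos hr
  have ht2 : t < 1 / 2 := lorenzRoot_lt_half hr
  have hy : ys ^ 2 = r * t := by rw [hys, Real.sq_sqrt (by rw [hξ]; positivity), hξ]
  have hy0 : ys ≠ 0 := by rintro rfl; nlinarith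
  have hσ0 : σ ≠ 0 := by rw [hσ, har, hrr]; norm_num
  have hD : σ + a * ξ = σ * (1 - t) := by rw [hξ, hσ]; ring
  rw [hD, mul_div_mul_left _ _ hσ0, ← hys] at hxs
  rw [hD, mul_div_mul_left _ _ hσ0, hξ] at hzs
  have hJ' : J = lorenzJacobian a σ r xs ys zs := hJ
  subst hJ' hxs hzs
  have heq := isLorenzEquilibrium_X1 hσ ht (by linarith) hy
  have hcubic := Matrix.cubic_eq_zero_of_mem_spectrum_map_ofReal hμ
  rw [trace_lorenzJacobian, heq.sumPrincipalMinors₂_lorenzJacobian hy0,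
    heq.det_lorenzJacobian hy0, sq_div_one_sub_eq ht (by linarith) hy, hy] at hcubic
  subst har hrr hσ
  refine Complex.re_neg_of_cubic_eq_zero (c₂ := 27 / 5) (c₁ := 16 - 12 / 5 * t)
    (c₀ := 1972 / 25) (by norm_num) (by norm_num) (by linarith) ?_
  push_cast at hcubic ⊢
  linear_combination hcubic
end

section
/- Let a > 0 and b > 0 with 4b - 3a > 0 and 3a² - 4ab + 4 ≥ 0, and set R1 = √(3a² - 4ab + 4), R2 = 4ab² - 7a²b + 3a³ + 2a. Assume b·R1 + 2b ≥ 0, R1 + 2 > 0 and (4b-3a)R1 + 8b - 6a ≠ 0, and define x* = √((b·R1 + 2b)/(4b - 3a)), y* = √(b(4b - 3a)/(R1 + 2)), z* = (a·R1 + R2)/((4b-3a)R1 + 8b - 6a). Then both points X1* = (-x*, y*, z*) and X2* = (x*, -y*, z*) are zeros of the Rabinovich–Fabrikant vector field f. -/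
/-!
Write `c = 4b - 3a` and `s = R1 + 2`. Then `R1² = 4 - ac` says exactly that `s` is a root of
`s² - 4s + ac = 0`, and since `4ab² - 7a²b + 3a³ = ac(b - a)` the third coordinate simplifies to
`z* = a/c + a(b - a)/s`. With `x*² = bs/c` and `x* y* = b`, the third component of the field
vanishes, and after multiplying the first two components by `x*` they become multiples of
`s² - 4s + ac`. The second equilibrium is the image of the first under `(x, y, z) ↦ (-x, -y, z)`,
a symmetry of the field.
-/

def rfField (a b x1 x2 x3 : ℝ) : ℝ × ℝ × ℝ :=
  (x2 * (x3 - 1 + x1 ^ 2) + a * x1, x1 * (3 * x3 + 1 - x1 ^ 2) + a * x2, -2 * x3 * (b + x1 * x2))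

section RabinovichFabrikant

variable {a b c s x y z : ℝ}

lemma rfField_neg_neg_eq_zero (h : rfField a b x y z = (0, 0, 0)) :
    rfField a b (-x) (-y) z = (0, 0, 0) := by
  simp only [rfField, Prod.mk.injEq] at h ⊢
  obtain ⟨h1, h2, h3⟩ := h
  exact ⟨by linear_combination -h1, by linear_combination -h2, by linear_combination h3⟩

lemma rfField_neg_eq_zero_of_mul_eq (hx : x ≠ 0) (hxy : x * y = b)
    (h1 : b * (z - 1 + x ^ 2) = a * x ^ 2) (h2 : x ^ 2 * (3 * z + 1 - x ^ 2) = a * b) :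
    rfField a b (-x) y z = (0, 0, 0) := by
  simp only [rfField, Prod.mk.injEq]
  refine ⟨?_, ?_, by linear_combination 2 * z * hxy⟩
  · refine (mul_eq_zero.1 ?_).resolve_left hx
    linear_combination (z - 1 + x ^ 2) * hxy + h1
  · refine (mul_eq_zero.1 ?_).resolve_left hx
    linear_combination a * hxy - h2

lemma rf_first_equilibrium_condition (hc : c ≠ 0) (hs : s ≠ 0) (hca : c = 4 * b - 3 * a)
    (hquad : s ^ 2 - 4 * s + a * c = 0) :
    b * (a / c + a * (b - a) / s - 1 + b * s / c) = a * (b * s / c) := by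
  field_simp
  subst hca
  linear_combination b * (b - a) * hquad

lemma rf_second_equilibrium_condition (hc : c ≠ 0) (hs : s ≠ 0) (hca : c = 4 * b - 3 * a)
    (hquad : s ^ 2 - 4 * s + a * c = 0) :
    b * s / c * (3 * (a / c + a * (b - a) / s) + 1 - b * s / c) = a * b := by
  field_simp
  subst hca
  linear_combination -b ^ 2 * hquad

lemma rfField_eq_zero_of_quadratic (hb : 0 < b) (hc : 0 < c) (hs : 0 < s)
    (hca : c = 4 * b - 3 * a) (hquad : s ^ 2 - 4 * s + a * c = 0) :
    rfField a b (-√(b * s / c)) √(b * c / s) (a / c + a * (b - a) / s) = (0, 0, 0) := by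
  have hxy : √(b * s / c) * √(b * c / s) = b := by
    rw [← Real.sqrt_mul (by positivity), show b * s / c * (b * c / s) = b ^ 2 by field_simp]
    exact Real.sqrt_sq hb.le
  apply rfField_neg_eq_zero_of_mul_eq (Real.sqrt_pos.2 (by positivity)).ne' hxy
  all_goals rw [Real.sq_sqrt (by positivity)]
  · exact rf_first_equilibrium_condition hc.ne' hs.ne' hca hquad
  · exact rf_second_equilibrium_condition hc.ne' hs.ne' hca hquad

end RabinovichFabrikant

theorem rf_equilibria_12_general (a b R1 R2 xs ys zs : ℝ)
    (hb : 0 < b) (h4b3a : 0 < 4 * b - 3 * a)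
    (hdisc : 0 ≤ 3 * a ^ 2 - 4 * a * b + 4)
    (hR1 : R1 = Real.sqrt (3 * a ^ 2 - 4 * a * b + 4))
    (hR2 : R2 = 4 * a * b ^ 2 - 7 * a ^ 2 * b + 3 * a ^ 3 + 2 * a)
    (hR1pos : 0 < R1 + 2)
    (hxs : xs = Real.sqrt ((b * R1 + 2 * b) / (4 * b - 3 * a)))
    (hys : ys = Real.sqrt (b * (4 * b - 3 * a) / (R1 + 2)))
    (hzs : zs = (a * R1 + R2) / ((4 * b - 3 * a) * R1 + 8 * b - 6 * a))
    (f : ℝ → ℝ → ℝ → ℝ × ℝ × ℝ)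
    (hf : ∀ x1 x2 x3 : ℝ,
      f x1 x2 x3 = (x2 * (x3 - 1 + x1 ^ 2) + a * x1,
        x1 * (3 * x3 + 1 - x1 ^ 2) + a * x2,
        -2 * x3 * (b + x1 * x2))) :
    f (-xs) ys zs = ((0 : ℝ), (0 : ℝ), (0 : ℝ)) ∧
      f xs (-ys) zs = ((0 : ℝ), (0 : ℝ), (0 : ℝ)) := by
  obtain rfl : f = rfField a b := funext₃ hf
  have hquad : (R1 + 2) ^ 2 - 4 * (R1 + 2) + a * (4 * b - 3 * a) = 0 := by
    rw [hR1]
    linear_combination Real.sq_sqrt hdisc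
  have hxs' : xs = √(b * (R1 + 2) / (4 * b - 3 * a)) := by
    rw [hxs, mul_add, mul_comm b 2]
  have hzs' : zs = a / (4 * b - 3 * a) + a * (b - a) / (R1 + 2) := by
    rw [hzs, hR2, show (4 * b - 3 * a) * R1 + 8 * b - 6 * a = (4 * b - 3 * a) * (R1 + 2) by ring,
      div_add_div _ _ h4b3a.ne' hR1pos.ne']
    ring
  have hX1 := rfField_eq_zero_of_quadratic hb h4b3a hR1pos rfl hquad
  rw [hxs', hys, hzs']
  exact ⟨hX1, by simpa only [neg_neg] using rfField_neg_neg_eq_zero hX1⟩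

/-- For suitable parameters, the points `X₁* = (-x*, y*, z*)` and `X₂* = (x*, -y*, z*)`
are zeros of the Rabinovich–Fabrikant vector field. -/
theorem rf_equilibria_12 (a b R1 R2 xs ys zs : ℝ)
    (ha : 0 < a) (hb : 0 < b) (h4b3a : 0 < 4 * b - 3 * a)
    (hdisc : 0 ≤ 3 * a ^ 2 - 4 * a * b + 4)
    (hR1 : R1 = Real.sqrt (3 * a ^ 2 - 4 * a * b + 4))
    (hR2 : R2 = 4 * a * b ^ 2 - 7 * a ^ 2 * b + 3 * a ^ 3 + 2 * a)
    (hnum : 0 ≤ b * R1 + 2 * b) (hR1pos : 0 < R1 + 2)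
    (hden : (4 * b - 3 * a) * R1 + 8 * b - 6 * a ≠ 0)
    (hxs : xs = Real.sqrt ((b * R1 + 2 * b) / (4 * b - 3 * a)))
    (hys : ys = Real.sqrt (b * (4 * b - 3 * a) / (R1 + 2)))
    (hzs : zs = (a * R1 + R2) / ((4 * b - 3 * a) * R1 + 8 * b - 6 * a))
    (f : ℝ → ℝ → ℝ → ℝ × ℝ × ℝ)
    (hf : ∀ x1 x2 x3 : ℝ,
      f x1 x2 x3 = (x2 * (x3 - 1 + x1 ^ 2) + a * x1,
        x1 * (3 * x3 + 1 - x1 ^ 2) + a * x2,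
        -2 * x3 * (b + x1 * x2))) :
    f (-xs) ys zs = ((0 : ℝ), (0 : ℝ), (0 : ℝ)) ∧
      f xs (-ys) zs = ((0 : ℝ), (0 : ℝ), (0 : ℝ)) :=
  rf_equilibria_12_general a b R1 R2 xs ys zs hb h4b3a hdisc hR1 hR2 hR1pos hxs hys hzs f hf
end

section
/- Let a > 0 and b > 0 with 3a - 4b ≠ 0 and 3a² - 4ab + 4 ≥ 0, and set R1 = √(3a² - 4ab + 4), R2 = 4ab² - 7a²b + 3a³ + 2a. Assume (b·R1 - 2b)/(3a - 4b) ≥ 0, b(4b - 3a)/(2 - R1) ≥ 0, 2 - R1 ≠ 0 and (4b-3a)R1 - 8b + 6a ≠ 0, and define x* = √((b·R1 - 2b)/(3a - 4b)), y* = √(b(4b - 3a)/(2 - R1)), z* = (a·R1 - R2)/((4b-3a)R1 - 8b + 6a). Then both points X3* = (-x*, y*, z*) and X4* = (x*, -y*, z*) are zeros of the Rabinovich–Fabrikant vector field f. -/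
/-!
Off the plane `x₃ = 0`, an equilibrium of the Rabinovich–Fabrikant field has `x₁x₂ = -b`.
Multiplying the first two components by `x₁` then turns them into the linear condition
`b x₃ = b + (a - b) p` and the quadratic `(3a - 4b) p² + 4b p - ab² = 0` in `p = x₁²`,
whose root `b (R₁ - 2) / (3a - 4b)` is `x*²`. The value `z*` is `1 + (a - b)(R₁ - 2) / (3a - 4b)`
written with a rationalized denominator, and `y* = b / x*`. Both conditions only involve
`x₁x₂` and `x₁²`, so `(-x*, y*, z*)` and `(x*, -y*, z*)` are equilibria together.
-/

def rabinovichFabrikant (a b x1 x2 x3 : ℝ) : ℝ × ℝ × ℝ :=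
  (x2 * (x3 - 1 + x1 ^ 2) + a * x1, x1 * (3 * x3 + 1 - x1 ^ 2) + a * x2,
    -2 * x3 * (b + x1 * x2))

theorem rabinovichFabrikant_eq_zero_of_mul_eq_neg {a b x1 x2 x3 p : ℝ} (hb : b ≠ 0)
    (hx1 : x1 ≠ 0) (hmul : x1 * x2 = -b) (hp : x1 ^ 2 = p)
    (hquad : (3 * a - 4 * b) * p ^ 2 + 4 * b * p - a * b ^ 2 = 0)
    (hx3 : b * x3 = b + (a - b) * p) :
    rabinovichFabrikant a b x1 x2 x3 = (0, 0, 0) := by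
  subst hp
  have h1 : x1 * (x2 * (x3 - 1 + x1 ^ 2) + a * x1) = 0 := by
    linear_combination (x3 - 1 + x1 ^ 2) * hmul - hx3
  have h2 : (b * x1) * (x1 * (3 * x3 + 1 - x1 ^ 2) + a * x2) = 0 := by
    linear_combination (a * b) * hmul + 3 * x1 ^ 2 * hx3 + hquad
  simp only [rabinovichFabrikant, Prod.mk.injEq]
  refine ⟨(mul_eq_zero.1 h1).resolve_left hx1,
    (mul_eq_zero.1 h2).resolve_left (mul_ne_zero hb hx1), ?_⟩
  rw [hmul, add_neg_cancel, mul_zero]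

theorem quadratic_eq_zero_of_sq_eq_discrim {a b R : ℝ}
    (hR : R ^ 2 = 3 * a ^ 2 - 4 * a * b + 4) (hab : 3 * a - 4 * b ≠ 0) :
    (3 * a - 4 * b) * ((b * R - 2 * b) / (3 * a - 4 * b)) ^ 2
      + 4 * b * ((b * R - 2 * b) / (3 * a - 4 * b)) - a * b ^ 2 = 0 := by
  field_simp
  linear_combination b ^ 2 * hR

theorem rationalized_eq_of_sq_eq_discrim {a b R : ℝ}
    (hR : R ^ 2 = 3 * a ^ 2 - 4 * a * b + 4) (hab : 3 * a - 4 * b ≠ 0) (hR2 : 2 - R ≠ 0) :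
    (a * R - (4 * a * b ^ 2 - 7 * a ^ 2 * b + 3 * a ^ 3 + 2 * a))
        / ((4 * b - 3 * a) * R - 8 * b + 6 * a)
      = 1 + (a - b) * ((R - 2) / (3 * a - 4 * b)) := by
  have hden : (4 * b - 3 * a) * R - 8 * b + 6 * a = (3 * a - 4 * b) * (2 - R) := by ring
  have hq : (3 * a - 4 * b) * ((R - 2) / (3 * a - 4 * b)) = R - 2 := mul_div_cancel₀ _ hab
  rw [hden, div_eq_iff (mul_ne_zero hab hR2)]
  linear_combination (a - b) * (R - 2) * hq + (a - b) * hR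

theorem rf_equilibria_34_general (a b R1 R2 xs ys zs : ℝ)
    (hb : 0 < b) (h3a4b : 3 * a - 4 * b ≠ 0)
    (hdisc : 0 ≤ 3 * a ^ 2 - 4 * a * b + 4)
    (hR1 : R1 = Real.sqrt (3 * a ^ 2 - 4 * a * b + 4))
    (hR2 : R2 = 4 * a * b ^ 2 - 7 * a ^ 2 * b + 3 * a ^ 3 + 2 * a)
    (hx_nonneg : 0 ≤ (b * R1 - 2 * b) / (3 * a - 4 * b))
    (hR1ne2 : 2 - R1 ≠ 0)
    (hxs : xs = Real.sqrt ((b * R1 - 2 * b) / (3 * a - 4 * b)))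
    (hys : ys = Real.sqrt (b * (4 * b - 3 * a) / (2 - R1)))
    (hzs : zs = (a * R1 - R2) / ((4 * b - 3 * a) * R1 - 8 * b + 6 * a))
    (f : ℝ → ℝ → ℝ → ℝ × ℝ × ℝ)
    (hf : ∀ x1 x2 x3 : ℝ,
      f x1 x2 x3 = (x2 * (x3 - 1 + x1 ^ 2) + a * x1,
        x1 * (3 * x3 + 1 - x1 ^ 2) + a * x2,
        -2 * x3 * (b + x1 * x2))) :
    f (-xs) ys zs = ((0 : ℝ), (0 : ℝ), (0 : ℝ)) ∧
      f xs (-ys) zs = ((0 : ℝ), (0 : ℝ), (0 : ℝ)) := by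
  obtain rfl : f = rabinovichFabrikant a b := by
    funext x1 x2 x3; exact hf x1 x2 x3
  have hr : R1 ^ 2 = 3 * a ^ 2 - 4 * a * b + 4 := by rw [hR1, Real.sq_sqrt hdisc]
  have hx2 : xs ^ 2 = (b * R1 - 2 * b) / (3 * a - 4 * b) := by rw [hxs, Real.sq_sqrt hx_nonneg]
  have hprod : (b * R1 - 2 * b) / (3 * a - 4 * b) * (b * (4 * b - 3 * a) / (2 - R1)) = b ^ 2 := by
    rw [div_mul_div_comm, div_eq_iff (mul_ne_zero h3a4b hR1ne2)]
    ring
  have hxy : xs * ys = b := by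
    rw [hxs, hys, ← Real.sqrt_mul hx_nonneg, hprod, Real.sqrt_sq hb.le]
  have hxs0 : xs ≠ 0 := left_ne_zero_of_mul (hxy ▸ hb.ne')
  have hz : b * zs = b + (a - b) * ((b * R1 - 2 * b) / (3 * a - 4 * b)) := by
    rw [hzs, hR2, rationalized_eq_of_sq_eq_discrim hr h3a4b hR1ne2]
    ring
  have hquad := quadratic_eq_zero_of_sq_eq_discrim hr h3a4b
  constructor
  · refine rabinovichFabrikant_eq_zero_of_mul_eq_neg hb.ne' (neg_ne_zero.2 hxs0) ?_
      (by rw [neg_sq, hx2]) hquad hz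
    linear_combination -hxy
  · refine rabinovichFabrikant_eq_zero_of_mul_eq_neg hb.ne' hxs0 ?_ hx2 hquad hz
    linear_combination -hxy

/-- For suitable parameters, the points `X₃* = (-x*, y*, z*)` and `X₄* = (x*, -y*, z*)`
are zeros of the Rabinovich–Fabrikant vector field. -/
theorem rf_equilibria_34 (a b R1 R2 xs ys zs : ℝ)
    (ha : 0 < a) (hb : 0 < b) (h3a4b : 3 * a - 4 * b ≠ 0)
    (hdisc : 0 ≤ 3 * a ^ 2 - 4 * a * b + 4)
    (hR1 : R1 = Real.sqrt (3 * a ^ 2 - 4 * a * b + 4))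
    (hR2 : R2 = 4 * a * b ^ 2 - 7 * a ^ 2 * b + 3 * a ^ 3 + 2 * a)
    (hx_nonneg : 0 ≤ (b * R1 - 2 * b) / (3 * a - 4 * b))
    (hy_nonneg : 0 ≤ b * (4 * b - 3 * a) / (2 - R1))
    (hR1ne2 : 2 - R1 ≠ 0)
    (hden : (4 * b - 3 * a) * R1 - 8 * b + 6 * a ≠ 0)
    (hxs : xs = Real.sqrt ((b * R1 - 2 * b) / (3 * a - 4 * b)))
    (hys : ys = Real.sqrt (b * (4 * b - 3 * a) / (2 - R1)))
    (hzs : zs = (a * R1 - R2) / ((4 * b - 3 * a) * R1 - 8 * b + 6 * a))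
    (f : ℝ → ℝ → ℝ → ℝ × ℝ × ℝ)
    (hf : ∀ x1 x2 x3 : ℝ,
      f x1 x2 x3 = (x2 * (x3 - 1 + x1 ^ 2) + a * x1,
        x1 * (3 * x3 + 1 - x1 ^ 2) + a * x2,
        -2 * x3 * (b + x1 * x2))) :
    f (-xs) ys zs = ((0 : ℝ), (0 : ℝ), (0 : ℝ)) ∧
      f xs (-ys) zs = ((0 : ℝ), (0 : ℝ), (0 : ℝ)) :=
  rf_equilibria_34_general a b R1 R2 xs ys zs hb h3a4b hdisc hR1 hR2 hx_nonneg hR1ne2 hxs hys hzs f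
    hf
end

section
/- Let a = 1/10, b = 2876/10000, R1 = √(3a² - 4ab + 4), R2 = 4ab² - 7a²b + 3a³ + 2a, x* = √((b·R1 + 2b)/(4b - 3a)), y* = √(b(4b - 3a)/(R1 + 2)), z* = (a·R1 + R2)/((4b-3a)R1 + 8b - 6a), and let J be the real 3×3 matrix [[2·(-x*)·y* + a, x*² + z* - 1, y*], [-3x*² + 3z* + 1, a, -3x*], [-2y*z*, 2x*z*, -2(-x*·y* + b)]] (the Jacobian of the Rabinovich–Fabrikant vector field at the equilibrium X1* = (-x*, y*, z*)). Then every complex eigenvalue of J has strictly negative real part. -/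
lemma cubic_re_neg (p q s : ℝ) (hp : 0 < p) (hs : 0 < s) (hpq : s < p * q)
    (μ : ℂ) (h : μ ^ 3 + (p : ℂ) * μ ^ 2 + (q : ℂ) * μ + (s : ℂ) = 0) : μ.re < 0 := by
  have hq : 0 < q := by nlinarith
  set x := μ.re with hx
  set y := μ.im with hy
  have hre : x ^ 3 - 3 * x * y ^ 2 + p * (x ^ 2 - y ^ 2) + q * x + s = 0 := by
    have := congrArg Complex.re h
    simp [Complex.add_re, Complex.mul_re, Complex.mul_im, pow_succ, pow_zero] at this
    linarith [this]
  have him : 3 * x ^ 2 * y - y ^ 3 + 2 * p * x * y + q * y = 0 := by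
    have := congrArg Complex.im h
    simp [Complex.add_im, Complex.mul_re, Complex.mul_im, pow_succ, pow_zero] at this
    linarith [this]
  by_contra hcon
  push_neg at hcon
  rcases eq_or_ne y 0 with hy0 | hy0
  · rw [hy0] at hre
    nlinarith [hre, pow_nonneg hcon 3, sq_nonneg x, mul_nonneg hcon (sq_nonneg x)]
  · have hsub : y ^ 2 = 3 * x ^ 2 + 2 * p * x + q := by
      have h2 : y * (3 * x ^ 2 - y ^ 2 + 2 * p * x + q) = 0 := by ring_nf; ring_nf at him; linarith
      rcases mul_eq_zero.mp h2 with h3 | h3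
      · exact absurd h3 hy0
      · linarith
    have key : -8 * x ^ 3 - 8 * p * x ^ 2 - 2 * q * x - 2 * p ^ 2 * x + s - p * q = 0 := by
      linear_combination hre + (3 * x + p) * hsub
    nlinarith [key, pow_nonneg hcon 3, mul_nonneg hcon (sq_nonneg x), sq_nonneg x,
      mul_nonneg hcon hcon]

set_option maxHeartbeats 2000000 in
/-- For `a = 0.1`, `b = 0.2876`, the Jacobian of the RF vector field at the
equilibrium `X₁* = (-x*, y*, z*)` has all its complex eigenvalues with strictly
negative real part. -/
theorem rf_X1_eigenvalues_stable (a b R1 R2 xs ys zs : ℝ)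
    (haa : a = 1/10) (hbb : b = 2876/10000)
    (hR1 : R1 = Real.sqrt (3 * a ^ 2 - 4 * a * b + 4))
    (hR2 : R2 = 4 * a * b ^ 2 - 7 * a ^ 2 * b + 3 * a ^ 3 + 2 * a)
    (hxs : xs = Real.sqrt ((b * R1 + 2 * b) / (4 * b - 3 * a)))
    (hys : ys = Real.sqrt (b * (4 * b - 3 * a) / (R1 + 2)))
    (hzs : zs = (a * R1 + R2) / ((4 * b - 3 * a) * R1 + 8 * b - 6 * a))
    (J : Matrix (Fin 3) (Fin 3) ℝ)
    (hJ : J = !![2 * (-xs) * ys + a, xs ^ 2 + zs - 1, ys;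
                 -3 * xs ^ 2 + 3 * zs + 1, a, -3 * xs;
                 -2 * ys * zs, 2 * xs * zs, -2 * (-xs * ys + b)]) :
    ∀ μ : ℂ, μ ∈ spectrum ℂ (J.map (Complex.ofReal ·)) → μ.re < 0 := by
  intro μ hμ
  -- basic facts about R1
  have hr0 : 0 ≤ R1 := hR1 ▸ Real.sqrt_nonneg _
  have hr2 : R1 ^ 2 = 48937 / 12500 := by
    rw [hR1, Real.sq_sqrt (by rw [haa, hbb]; norm_num), haa, hbb]; norm_num
  have hrlo : 19786 / 10000 ≤ R1 := by nlinarith [hr2, hr0]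
  have hrhi : R1 ≤ 19787 / 10000 := by nlinarith [hr2, hr0]
  have hr2ne : R1 + 2 ≠ 0 := by positivity
  -- xs facts
  have hA : 0 ≤ (b * R1 + 2 * b) / (4 * b - 3 * a) := by
    rw [haa, hbb]; apply div_nonneg (by nlinarith [hr0]) (by norm_num)
  have hu : xs ^ 2 = (b * R1 + 2 * b) / (4 * b - 3 * a) := by
    rw [hxs]; exact Real.sq_sqrt hA
  have hu' : xs ^ 2 * (1063 / 1250) = 2876 / 10000 * R1 + 5752 / 10000 := by
    rw [hu, haa, hbb]; field_simp; ring
  have hulo : 13455 / 10000 ≤ xs ^ 2 := by linarith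
  have huhi : xs ^ 2 ≤ 13456 / 10000 := by linarith
  -- ys facts
  have hB : 0 ≤ b * (4 * b - 3 * a) / (R1 + 2) := by
    rw [haa, hbb]; apply div_nonneg (by norm_num) (by nlinarith [hr0])
  have hv : ys ^ 2 = b * (4 * b - 3 * a) / (R1 + 2) := by
    rw [hys]; exact Real.sq_sqrt hB
  have hv' : ys ^ 2 * (R1 + 2) = 3057188 / 12500000 := by
    rw [hv, haa, hbb]; field_simp; ring
  have hvlo : 614 / 10000 ≤ ys ^ 2 := by nlinarith [hv', hrlo, hrhi, sq_nonneg ys]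
  have hvhi : ys ^ 2 ≤ 615 / 10000 := by nlinarith [hv', hrlo, hrhi, sq_nonneg ys]
  -- xs * ys = b
  have hXY : xs * ys = b := by
    rw [hxs, hys, ← Real.sqrt_mul hA]
    rw [show (b * R1 + 2 * b) / (4 * b - 3 * a) * (b * (4 * b - 3 * a) / (R1 + 2)) = b ^ 2 by
      rw [haa, hbb]; field_simp]
    rw [Real.sqrt_sq (by rw [hbb]; norm_num)]
  -- zs facts
  have hden : (0 : ℝ) < 1063 / 1250 * (R1 + 2) := by nlinarith [hr0]
  have hzval : zs = (R1 / 10 + 6748547 / 31250000) / (1063 / 1250 * (R1 + 2)) := by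
    rw [hzs, hR2, haa, hbb]
    congr 1 <;> ring
  have hzlo : 1223 / 10000 ≤ zs := by
    rw [hzval, le_div_iff₀ hden]; nlinarith [hrlo, hrhi]
  have hzhi : zs ≤ 12231 / 100000 := by
    rw [hzval, div_le_iff₀ hden]; nlinarith [hrlo, hrhi]
  -- determinant equation
  rw [spectrum.mem_iff, Matrix.isUnit_iff_isUnit_det] at hμ
  have hdet : ((algebraMap ℂ (Matrix (Fin 3) (Fin 3) ℂ)) μ - J.map (Complex.ofReal ·)).det = 0 := by
    by_contra h
    exact hμ (isUnit_iff_ne_zero.mpr h)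
  rw [Matrix.det_fin_three] at hdet
  simp only [Matrix.sub_apply, Matrix.algebraMap_matrix_apply, Matrix.map_apply, hJ,
    Matrix.cons_val', Matrix.cons_val_zero, Matrix.cons_val_one, Matrix.head_cons,
    Matrix.empty_val', Matrix.cons_val_fin_one, Matrix.head_fin_const,
    Matrix.cons_val_two, Matrix.tail_cons, if_true, if_false,
    Fin.zero_eta, Fin.mk_one, Fin.isValue, ne_eq, Matrix.of_apply, Fin.reduceEq,
    reduceIte, Algebra.algebraMap_self, RingHom.id_apply] at hdet
  -- characteristic polynomial form
  set p : ℝ := 2 * b - 2 * a with hp_def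
  set q : ℝ := ((2 * (-xs) * ys + a) * a - (xs ^ 2 + zs - 1) * (-3 * xs ^ 2 + 3 * zs + 1))
      + ((2 * (-xs) * ys + a) * (-2 * (-xs * ys + b)) - ys * (-2 * ys * zs))
      + (a * (-2 * (-xs * ys + b)) - (-3 * xs) * (2 * xs * zs)) with hq_def
  set s : ℝ := -((2 * (-xs) * ys + a) * (a * (-2 * (-xs * ys + b)) - (-3 * xs) * (2 * xs * zs))
      - (xs ^ 2 + zs - 1) * ((-3 * xs ^ 2 + 3 * zs + 1) * (-2 * (-xs * ys + b)) - (-3 * xs) * (-2 * ys * zs))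
      + ys * ((-3 * xs ^ 2 + 3 * zs + 1) * (2 * xs * zs) - a * (-2 * ys * zs))) with hs_def
  have hpoly : μ ^ 3 + (p : ℝ) * μ ^ 2 + (q : ℝ) * μ + (s : ℝ) = 0 := by
    rw [hp_def, hq_def, hs_def]
    push_cast
    push_cast at hdet
    linear_combination hdet
  -- reduced forms
  have hq_eq : q = (-2 * b + a) * a - (xs ^ 2 + zs - 1) * (-3 * xs ^ 2 + 3 * zs + 1)
      + 2 * ys ^ 2 * zs + 6 * xs ^ 2 * zs := by
    rw [hq_def]; linear_combination (2 * a - 4 * xs * ys) * hXY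
  have hs_eq : s = -(6 * (-2 * b + a) * xs ^ 2 * zs + 6 * b * (xs ^ 2 + zs - 1) * zs
      + 2 * b * zs * (-3 * xs ^ 2 + 3 * zs + 1) + 2 * a * ys ^ 2 * zs) := by
    rw [hs_def]
    linear_combination (-(2 * a * (2 * (-xs) * ys + a) - 12 * xs ^ 2 * zs
      - 2 * (xs ^ 2 + zs - 1) * (-3 * xs ^ 2 + 3 * zs + 1)
      + 6 * (xs ^ 2 + zs - 1) * zs + 2 * zs * (-3 * xs ^ 2 + 3 * zs + 1))) * hXY
  -- inequalities
  have hp_pos : 0 < p := by rw [hp_def, haa, hbb]; norm_num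
  have hu2lo : 18103 / 10000 ≤ xs ^ 2 * xs ^ 2 := by nlinarith only [hulo, huhi]
  have hu2hi : xs ^ 2 * xs ^ 2 ≤ 18107 / 10000 := by nlinarith only [hulo, huhi]
  have huzlo : 16455 / 100000 ≤ xs ^ 2 * zs := by nlinarith only [hulo, huhi, hzlo, hzhi]
  have huzhi : xs ^ 2 * zs ≤ 16459 / 100000 := by nlinarith only [hulo, huhi, hzlo, hzhi]
  have hvzlo : 750 / 100000 ≤ ys ^ 2 * zs := by nlinarith only [hvlo, hvhi, hzlo, hzhi]
  have hvzhi : ys ^ 2 * zs ≤ 753 / 100000 := by nlinarith only [hvlo, hvhi, hzlo, hzhi]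
  have hz2lo : 14957 / 1000000 ≤ zs ^ 2 := by nlinarith only [hzlo, hzhi]
  have hz2hi : zs ^ 2 ≤ 14960 / 1000000 := by nlinarith only [hzlo, hzhi]
  have hs_pos : 0 < s := by
    rw [hs_eq, haa, hbb]
    nlinarith only [huzlo, hz2hi, hzlo, hvzhi]
  have hpq : s < p * q := by
    rw [hs_eq, hq_eq, hp_def, haa, hbb]
    nlinarith only [hu2lo, huzlo, huzhi, hvzlo, hvzhi, hz2lo, hz2hi, hzlo, hzhi, huhi, hulo]
  exact cubic_re_neg p q s hp_pos hs_pos hpq μ hpoly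
end

section
/- Let a = 1/10, b = 2876/10000, R1 = √(3a² - 4ab + 4), R2 = 4ab² - 7a²b + 3a³ + 2a, x* = √((b·R1 - 2b)/(3a - 4b)), y* = √(b(4b - 3a)/(2 - R1)), z* = (a·R1 - R2)/((4b-3a)R1 - 8b + 6a), and let J be the real 3×3 matrix [[2·(-x*)·y* + a, x*² + z* - 1, y*], [-3x*² + 3z* + 1, a, -3x*], [-2y*z*, 2x*z*, -2(-x*·y* + b)]] (the Jacobian of the Rabinovich–Fabrikant vector field at the equilibrium X3* = (-x*, y*, z*)). Then J has a real eigenvalue that is strictly positive. -/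
lemma mulIcc {x y l1 u1 l2 u2 : ℝ} (h1 : l1 ≤ x) (h2 : x ≤ u1) (h3 : l2 ≤ y)
    (h4 : y ≤ u2) (hl1 : 0 ≤ l1) (hl2 : 0 ≤ l2) :
    l1 * l2 ≤ x * y ∧ x * y ≤ u1 * u2 :=
  ⟨mul_le_mul h1 h3 hl2 (hl1.trans h1),
   mul_le_mul h2 h4 (hl2.trans h3) ((hl1.trans h1).trans h2)⟩

lemma rf_det_formula (a b xs ys zs : ℝ)
    (J : Matrix (Fin 3) (Fin 3) ℝ)
    (hJ : J = !![2 * (-xs) * ys + a, xs ^ 2 + zs - 1, ys;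
                 -3 * xs ^ 2 + 3 * zs + 1, a, -3 * xs;
                 -2 * ys * zs, 2 * xs * zs, -2 * (-xs * ys + b)]) (μ : ℝ) :
    (μ • (1 : Matrix (Fin 3) (Fin 3) ℝ) - J).det =
      (μ + 2*xs*ys - a) * ((μ - a) * (μ - 2*xs*ys + 2*b) - (3*xs) * (-2*xs*zs))
      - (-(xs^2 + zs - 1)) * ((3*xs^2 - 3*zs - 1) * (μ - 2*xs*ys + 2*b)
          - (3*xs) * (2*ys*zs))
      + (-ys) * ((3*xs^2 - 3*zs - 1) * (-2*xs*zs) - (μ - a) * (2*ys*zs)) := by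
  have hM : μ • (1 : Matrix (Fin 3) (Fin 3) ℝ) - J =
      !![μ - (2 * (-xs) * ys + a), -(xs ^ 2 + zs - 1), -ys;
         -(-3 * xs ^ 2 + 3 * zs + 1), μ - a, 3 * xs;
         2 * ys * zs, -(2 * xs * zs), μ - (-2 * (-xs * ys + b))] := by
    rw [hJ]
    ext i j
    fin_cases i <;> fin_cases j <;> simp [Matrix.one_apply]
  rw [hM]
  simp [Matrix.det_fin_three]
  ring

set_option maxHeartbeats 1600000 in
/-- For `a = 0.1`, `b = 0.2876`, the Jacobian of the RF vector field at the
equilibrium `X₃* = (-x*, y*, z*)` has a strictly positive real eigenvalue. -/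
theorem rf_X3_unstable (a b R1 R2 xs ys zs : ℝ)
    (haa : a = 1/10) (hbb : b = 2876/10000)
    (hR1 : R1 = Real.sqrt (3 * a ^ 2 - 4 * a * b + 4))
    (hR2 : R2 = 4 * a * b ^ 2 - 7 * a ^ 2 * b + 3 * a ^ 3 + 2 * a)
    (hxs : xs = Real.sqrt ((b * R1 - 2 * b) / (3 * a - 4 * b)))
    (hys : ys = Real.sqrt (b * (4 * b - 3 * a) / (2 - R1)))
    (hzs : zs = (a * R1 - R2) / ((4 * b - 3 * a) * R1 - 8 * b + 6 * a))
    (J : Matrix (Fin 3) (Fin 3) ℝ)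
    (hJ : J = !![2 * (-xs) * ys + a, xs ^ 2 + zs - 1, ys;
                 -3 * xs ^ 2 + 3 * zs + 1, a, -3 * xs;
                 -2 * ys * zs, 2 * xs * zs, -2 * (-xs * ys + b)]) :
    ∃ μ : ℝ, 0 < μ ∧ μ ∈ spectrum ℝ J := by
  -- bounds on R1
  have hs : 3 * a ^ 2 - 4 * a * b + 4 = 48937/12500 := by rw [haa, hbb]; norm_num
  have hR1l : (1.9786257 : ℝ) ≤ R1 := by
    rw [hR1, hs]; exact Real.le_sqrt_of_sq_le (by norm_num)
  have hR1u : R1 ≤ 1.9786258 := by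
    rw [hR1, hs]; exact Real.sqrt_le_iff.mpr ⟨by norm_num, by norm_num⟩
  -- bounds on xs
  have hxarg : (b * R1 - 2 * b) / (3 * a - 4 * b) = (2 - R1) * (719/2126) := by
    rw [haa, hbb]; ring
  have hxl : (0.085021 : ℝ) ≤ xs := by
    rw [hxs, hxarg]; exact Real.le_sqrt_of_sq_le (by nlinarith)
  have hxu : xs ≤ 0.085022 := by
    rw [hxs, hxarg]; exact Real.sqrt_le_iff.mpr ⟨by norm_num, by nlinarith⟩
  -- bounds on ys
  have hyarg : b * (4 * b - 3 * a) / (2 - R1) = (764297/3125000) / (2 - R1) := by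
    rw [haa, hbb]; norm_num
  have h2R1 : (0 : ℝ) < 2 - R1 := by linarith
  have hyl : (3.38267 : ℝ) ≤ ys := by
    rw [hys, hyarg]
    refine Real.le_sqrt_of_sq_le ?_
    rw [le_div_iff₀ h2R1]; nlinarith
  have hyu : ys ≤ 3.38269 := by
    rw [hys, hyarg]
    refine Real.sqrt_le_iff.mpr ⟨by norm_num, ?_⟩
    rw [div_le_iff₀ h2R1]; nlinarith
  -- bounds on zs
  have hden : (4 * b - 3 * a) * R1 - 8 * b + 6 * a < 0 := by
    rw [haa, hbb]; nlinarith
  have hzl : (0.99528 : ℝ) ≤ zs := by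
    rw [hzs, le_div_iff_of_neg hden, haa, hbb, hR2]; nlinarith
  have hzu : zs ≤ 0.99529 := by
    rw [hzs, div_le_iff_of_neg hden, haa, hbb, hR2]; nlinarith
  -- monomial bounds
  have hx0 : (0:ℝ) ≤ 0.085021 := by norm_num
  have hy0 : (0:ℝ) ≤ 3.38267 := by norm_num
  have hz0 : (0:ℝ) ≤ 0.99528 := by norm_num
  obtain ⟨hZ2l, hZ2u⟩ := mulIcc hzl hzu hzl hzu hz0 hz0
  obtain ⟨hY2l, hY2u⟩ := mulIcc hyl hyu hyl hyu hy0 hy0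
  obtain ⟨hY2Zl, hY2Zu⟩ := mulIcc hY2l hY2u hzl hzu (by positivity) hz0
  obtain ⟨hXYl, hXYu⟩ := mulIcc hxl hxu hyl hyu hx0 hy0
  obtain ⟨hXYZ2l, hXYZ2u⟩ := mulIcc hXYl hXYu hZ2l hZ2u (by positivity) (by positivity)
  obtain ⟨hX2l, hX2u⟩ := mulIcc hxl hxu hxl hxu hx0 hx0
  obtain ⟨hX2Zl, hX2Zu⟩ := mulIcc hX2l hX2u hzl hzu (by positivity) hz0
  obtain ⟨hX2Y2l, hX2Y2u⟩ := mulIcc hXYl hXYu hXYl hXYu (by positivity) (by positivity)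
  obtain ⟨hX3Yl, hX3Yu⟩ := mulIcc hX2l hX2u hXYl hXYu (by positivity) (by positivity)
  obtain ⟨hX3YZl, hX3YZu⟩ := mulIcc hX3Yl hX3Yu hzl hzu (by positivity) hz0
  obtain ⟨hX4l, hX4u⟩ := mulIcc hX2l hX2u hX2l hX2u (by positivity) (by positivity)
  obtain ⟨hX5Yl, hX5Yu⟩ := mulIcc hX4l hX4u hXYl hXYu (by positivity) (by positivity)
  -- the characteristic function
  set f : ℝ → ℝ := fun μ => (μ • (1 : Matrix (Fin 3) (Fin 3) ℝ) - J).det with hfdef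
  have hf : ∀ μ : ℝ, f μ =
      (μ + 2*xs*ys - a) * ((μ - a) * (μ - 2*xs*ys + 2*b) - (3*xs) * (-2*xs*zs))
      - (-(xs^2 + zs - 1)) * ((3*xs^2 - 3*zs - 1) * (μ - 2*xs*ys + 2*b)
          - (3*xs) * (2*ys*zs))
      + (-ys) * ((3*xs^2 - 3*zs - 1) * (-2*xs*zs) - (μ - a) * (2*ys*zs)) :=
    fun μ => rf_det_formula a b xs ys zs J hJ μ
  have hf0 : f 0 < 0 := by
    rw [hf 0, haa, hbb]; linarith
  have hf10 : 0 < f 10 := by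
    rw [hf 10, haa, hbb]; linarith
  have hcont : ContinuousOn f (Set.Icc 0 10) := by
    have : Continuous f := by
      have h2 : f = fun μ : ℝ =>
        (μ + 2*xs*ys - a) * ((μ - a) * (μ - 2*xs*ys + 2*b) - (3*xs) * (-2*xs*zs))
        - (-(xs^2 + zs - 1)) * ((3*xs^2 - 3*zs - 1) * (μ - 2*xs*ys + 2*b)
            - (3*xs) * (2*ys*zs))
        + (-ys) * ((3*xs^2 - 3*zs - 1) * (-2*xs*zs) - (μ - a) * (2*ys*zs)) :=
        funext hf
      rw [h2]; fun_prop
    exact this.continuousOn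
  obtain ⟨μ, hμmem, hμeq⟩ := intermediate_value_Icc (by norm_num : (0:ℝ) ≤ 10) hcont
    (Set.mem_Icc.mpr ⟨hf0.le, hf10.le⟩)
  have hμpos : 0 < μ := by
    rcases lt_or_eq_of_le hμmem.1 with h | h
    · exact h
    · exfalso; rw [← h] at hμeq; rw [hμeq] at hf0; exact lt_irrefl 0 hf0
  refine ⟨μ, hμpos, ?_⟩
  rw [spectrum.mem_iff]
  intro hunit
  rw [Algebra.algebraMap_eq_smul_one] at hunit
  have hdet := (Matrix.isUnit_iff_isUnit_det _).mp hunit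
  rw [isUnit_iff_ne_zero] at hdet
  exact hdet hμeq
end
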